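/- arXiv:2205.14612 — 5 statements merged into one kernel-verified Lean document; each statement's English description precedes it below -/
import Mathlib

section
/- Fix a, b ∈ ℝ^d with a ≠ 0 and let φ(x, s) = a·s + b. Let x solve x'(s) = φ(x(s), s), x(0) = x₀, and let x_n be the Euler iterates with step 1/N: x_{n+1} = x_n + (1/N)(a·(n/N) + b). Then ‖x_N − x(1)‖ = ‖a‖/(2N). -/
open Set Real

/-! Both the flow and the Euler scheme integrate `s ↦ s • a + b` in closed form: the flow gives
`x 1 = x₀ + a / 2 + b`, while the Euler sum is a left Riemann sum and gives
`x_N = x₀ + (N - 1) / (2N) • a + b`. The two differ by exactly `-(1 / (2N)) • a`. -/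

section

variable {E : Type*}

theorem apply_eq_of_hasDerivAt_smul_add [NormedAddCommGroup E] [NormedSpace ℝ E]
    {a b : E} {x : ℝ → E} {T : ℝ} (hx : ∀ s ∈ Icc 0 T, HasDerivAt x (s • a + b) s) :
    ∀ t ∈ Icc 0 T, x t = x 0 + (t ^ 2 / 2) • a + t • b := by
  have hg : ∀ s, HasDerivAt (fun s : ℝ ↦ x 0 + (s ^ 2 / 2) • a + s • b) (s • a + b) s := by
    intro s
    have hsq : HasDerivAt (fun s : ℝ ↦ s ^ 2 / 2) s s := by
      simpa using (hasDerivAt_pow 2 s).div_const 2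
    have hsum := ((hasDerivAt_const s (x 0)).add (hsq.smul_const a)).add
      ((hasDerivAt_id s).smul_const b)
    rwa [zero_add, one_smul] at hsum
  exact eq_of_has_deriv_right_eq (fun s hs ↦ (hx s (Ico_subset_Icc_self hs)).hasDerivWithinAt)
    (fun s _ ↦ (hg s).hasDerivWithinAt) (fun s hs ↦ (hx s hs).continuousAt.continuousWithinAt)
    (fun s _ ↦ (hg s).continuousAt.continuousWithinAt) (by simp)

theorem euler_iterate_eq_of_smul_add [AddCommGroup E] [Module ℝ E] {a b : E} {h : ℝ}
    {x : ℕ → E} (hx : ∀ n : ℕ, x (n + 1) = x n + h • ((n * h) • a + b)) (n : ℕ) :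
    x n = x 0 + (h ^ 2 * (n * (n - 1)) / 2) • a + (n * h) • b := by
  induction n with
  | zero => simp
  | succ n ih =>
    rw [hx, ih]
    push_cast
    module

end

theorem euler_error_tight_general
    {d : ℕ} (a b : EuclideanSpace ℝ (Fin d))
    (x : ℝ → EuclideanSpace ℝ (Fin d)) (x₀ : EuclideanSpace ℝ (Fin d))
    (hx0 : x 0 = x₀)
    (hx : ∀ s ∈ Icc (0:ℝ) 1, HasDerivAt x (s • a + b) s)
    (N : ℕ) (hN : 1 ≤ N)
    (xd : ℕ → EuclideanSpace ℝ (Fin d)) (hxd0 : xd 0 = x₀)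
    (hxd : ∀ n : ℕ, xd (n + 1) = xd n + (N : ℝ)⁻¹ • (((n : ℝ) / N) • a + b)) :
    ‖xd N - x 1‖ = ‖a‖ / (2 * N) := by
  have hNpos : (0 : ℝ) < N := by exact_mod_cast hN
  have hflow := apply_eq_of_hasDerivAt_smul_add hx 1 ⟨zero_le_one, le_rfl⟩
  have heuler := euler_iterate_eq_of_smul_add (h := (N : ℝ)⁻¹) (x := xd)
    (by simpa only [div_eq_mul_inv] using hxd) N
  have herror : xd N - x 1 = (-(1 / (2 * N)) : ℝ) • a := by
    rw [heuler, hflow, hx0, hxd0, mul_inv_cancel₀ hNpos.ne']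
    have hcoeff : (N : ℝ)⁻¹ ^ 2 * (N * (N - 1)) / 2 - 1 ^ 2 / 2 = -(1 / (2 * N)) := by
      field_simp
      ring
    rw [← hcoeff]
    module
  rw [herror, norm_smul, norm_neg, norm_of_nonneg (by positivity)]
  ring

/-- Tightness of the Euler error bound: for `φ(x, s) = s • a + b` the Euler error
at time 1 is exactly `‖a‖ / (2N)`. -/
theorem euler_error_tight
    {d : ℕ} (a b : EuclideanSpace ℝ (Fin d)) (ha : a ≠ 0)
    (x : ℝ → EuclideanSpace ℝ (Fin d)) (x₀ : EuclideanSpace ℝ (Fin d))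
    (hx0 : x 0 = x₀)
    (hx : ∀ s ∈ Icc (0:ℝ) 1, HasDerivAt x (s • a + b) s)
    (N : ℕ) (hN : 1 ≤ N)
    (xd : ℕ → EuclideanSpace ℝ (Fin d)) (hxd0 : xd 0 = x₀)
    (hxd : ∀ n : ℕ, xd (n + 1) = xd n + (N : ℝ)⁻¹ • (((n : ℝ) / N) • a + b)) :
    ‖xd N - x 1‖ = ‖a‖ / (2 * N) :=
  euler_error_tight_general a b x x₀ hx0 hx N hN xd hxd0 hxd
end

section
/- Consider the ResNet iteration x_{n+1} = x_n + (1/N) f(x_n, θ_n^N) in ℝ with f(x, θ) = θ (constant residual functions) and weights θ_n^N = n for 0 ≤ n ≤ N−1. Then x_N = x₀ + (N−1)/2, whereas the solution at time 1 of the ODE x'(s) = φ(x(s), s) with φ(x, s) = Ns (the residual interpolation) starting from x₀ is x(1) = x₀ + N/2, so ‖x_N − x(1)‖ = 1/2 for every N. -/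
open Set Real

/-! The ResNet is the left Riemann sum, with step `1/N`, of the ODE's right-hand side `s ↦ N s`.
For a linear integrand the left Riemann sum undershoots the integral by half the step times the
total rise, here `(1/N) · N / 2 = 1/2`, independently of `N`. -/

theorem eq_add_mul_triangle_of_succ_eq_add_mul {x : ℕ → ℝ} {c : ℝ}
    (hx : ∀ n : ℕ, x (n + 1) = x n + c * n) (n : ℕ) :
    x n = x 0 + c * (n * (n - 1) / 2) := by
  induction n with
  | zero => simp
  | succ n ih =>
    rw [hx n, ih]
    push_cast
    ring

theorem sub_eq_of_hasDerivAt_const_mul {f : ℝ → ℝ} {c a b : ℝ}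
    (hf : ∀ s ∈ uIcc a b, HasDerivAt f (c * s) s) :
    f b - f a = c * (b ^ 2 - a ^ 2) / 2 := by
  rw [← intervalIntegral.integral_eq_sub_of_hasDerivAt hf
    ((continuous_const_mul c).intervalIntegrable a b), intervalIntegral.integral_const_mul,
    integral_id]
  ring

/-- ResNet with residuals `f(x, θ_n) = n` versus the residual-interpolation ODE
`x'(s) = N s`: the gap at time 1 equals `1/2` for every depth `N`. -/
theorem resnet_residual_interpolation_gap
    (N : ℕ) (hN : 1 ≤ N)
    (x : ℕ → ℝ) (x₀ : ℝ) (hx0 : x 0 = x₀)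
    (hx : ∀ n : ℕ, x (n + 1) = x n + (N : ℝ)⁻¹ * n)
    (xc : ℝ → ℝ) (hxc0 : xc 0 = x₀)
    (hxc : ∀ s ∈ Icc (0:ℝ) 1, HasDerivAt xc ((N : ℝ) * s) s) :
    x N = x₀ + ((N : ℝ) - 1) / 2 ∧ xc 1 = x₀ + (N : ℝ) / 2 ∧ ‖x N - xc 1‖ = 1 / 2 := by
  have hN₀ : (N : ℝ) ≠ 0 := Nat.cast_ne_zero.mpr (by omega)
  have hdiscrete : x N = x₀ + ((N : ℝ) - 1) / 2 := by
    rw [eq_add_mul_triangle_of_succ_eq_add_mul hx N, hx0]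
    field_simp
  have hcontinuous : xc 1 = x₀ + (N : ℝ) / 2 := by
    have := sub_eq_of_hasDerivAt_const_mul (a := 0) (b := 1) (by rwa [uIcc_of_le zero_le_one])
    rw [hxc0] at this
    linarith
  refine ⟨hdiscrete, hcontinuous, ?_⟩
  rw [hdiscrete, hcontinuous, show x₀ + ((N : ℝ) - 1) / 2 - (x₀ + N / 2) = -(1 / 2) by ring]
  norm_num
end

section
/- Consider the ResNet x_{n+1} = x_n + (1/N) f(x_n, θ_n^N) in ℝ with f(x, θ) = θ² and alternating weights θ_n^N = (−1)^n. Then x_N = x₀ + 1. For the weight interpolation φ(x, s) = ((n+1 − Ns)θ_n^N + (Ns − n)θ_{n+1}^N)² on s ∈ [n/N, (n+1)/N], the ODE solution satisfies x(1) = x₀ + 1/3. Hence ‖x_N − x(1)‖ = 2/3 for every even N ≥ 2. -/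
open Set Real

/-!
Every ResNet step adds `N⁻¹ θ_n² = N⁻¹`, so `x_N = x₀ + 1`. On the `n`-th interval the interpolated
weight is `(-1)^n (2n + 1 - 2Ns)`, whose square `(2Ns - (2n+1))²` has the antiderivative
`(2Ns - (2n+1))³ / (6N)`; it runs from `-1` to `1` over the interval, so each interval contributes
`1 / (3N)` and `x(1) = x₀ + 1/3`.
-/

theorem eq_add_nsmul_of_succ_eq_add {G : Type*} [AddCommGroup G] {x : ℕ → G} {c : G} {m : ℕ}
    (h : ∀ n < m, x (n + 1) = x n + c) : x m = x 0 + m • c := by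
  have hdiff : ∀ n ∈ Finset.range m, x (n + 1) - x n = c := fun n hn => by
    rw [h n (Finset.mem_range.1 hn), add_sub_cancel_left]
  rw [← sub_eq_iff_eq_add', ← Finset.sum_range_sub, Finset.sum_congr rfl hdiff,
    Finset.sum_const, Finset.card_range]

theorem sub_eq_sub_of_hasDerivAt_eq {f g f' : ℝ → ℝ} {a b : ℝ} (hab : a ≤ b)
    (hf : ∀ s ∈ Icc a b, HasDerivAt f (f' s) s) (hg : ∀ s ∈ Icc a b, HasDerivAt g (f' s) s) :
    f b - f a = g b - g a := by
  have hconst := constant_of_has_deriv_right_zero (f := f - g) (a := a) (b := b)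
    (fun s hs => ((hf s hs).sub (hg s hs)).continuousAt.continuousWithinAt)
    (fun s hs => by
      simpa using ((hf s (Ico_subset_Icc_self hs)).sub (hg s (Ico_subset_Icc_self hs))).hasDerivWithinAt)
    b ⟨hab, le_rfl⟩
  simp only [Pi.sub_apply] at hconst
  linarith

theorem sub_eq_of_hasDerivAt_affine_sq {y : ℝ → ℝ} {α β a b : ℝ} (hα : α ≠ 0) (hab : a ≤ b)
    (hy : ∀ s ∈ Icc a b, HasDerivAt y ((α * s + β) ^ 2) s) :
    y b - y a = ((α * b + β) ^ 3 - (α * a + β) ^ 3) / (3 * α) := by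
  have hcube : ∀ s, HasDerivAt (fun s => (α * s + β) ^ 3 / (3 * α)) ((α * s + β) ^ 2) s := by
    intro s
    refine ((((hasDerivAt_id' s).const_mul α).add_const β).pow 3).div_const (3 * α) |>.congr_deriv ?_
    field_simp
    ring
  rw [sub_eq_sub_of_hasDerivAt_eq hab hy fun s _ => hcube s, sub_div]

theorem alternating_interpolation_sq (N n s : ℝ) (k : ℕ) :
    ((n + 1 - N * s) * (-1 : ℝ) ^ k + (N * s - n) * (-1 : ℝ) ^ (k + 1)) ^ 2
      = (2 * N * s - (2 * n + 1)) ^ 2 := by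
  have hsq : ((-1 : ℝ) ^ k) ^ 2 = 1 := by rw [pow_right_comm, neg_one_sq, one_pow]
  linear_combination (2 * N * s - (2 * n + 1)) ^ 2 * hsq

theorem sub_eq_of_hasDerivAt_alternating_interpolation_sq {N : ℝ} (hN : 0 < N) (n : ℕ)
    {y : ℝ → ℝ} (hy : ∀ s ∈ Icc (n / N) ((n + 1) / N),
      HasDerivAt y (((n + 1 - N * s) * (-1 : ℝ) ^ n + (N * s - n) * (-1 : ℝ) ^ (n + 1)) ^ 2) s) :
    y ((n + 1) / N) - y (n / N) = (3 * N)⁻¹ := by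
  have hab : n / N ≤ (n + 1) / N := by gcongr; linarith
  rw [sub_eq_of_hasDerivAt_affine_sq (α := 2 * N) (β := -(2 * n + 1)) (by positivity) hab
    fun s hs => by rw [← sub_eq_add_neg, ← alternating_interpolation_sq]; exact hy s hs]
  field_simp
  ring

theorem resnet_weight_interpolation_gap_general
    (N : ℕ) (hN : 2 ≤ N)
    (x : ℕ → ℝ) (x₀ : ℝ) (hx0 : x 0 = x₀)
    (hx : ∀ n : ℕ, x (n + 1) = x n + (N : ℝ)⁻¹ * ((-1 : ℝ) ^ n) ^ 2)
    (φ : ℝ → ℝ)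
    (hφ : ∀ n : ℕ, n < N → ∀ s ∈ Icc ((n : ℝ) / N) (((n : ℝ) + 1) / N),
      φ s = (((n : ℝ) + 1 - N * s) * (-1 : ℝ) ^ n + ((N : ℝ) * s - n) * (-1 : ℝ) ^ (n + 1)) ^ 2)
    (xc : ℝ → ℝ) (hxc0 : xc 0 = x₀)
    (hxc : ∀ s ∈ Icc (0:ℝ) 1, HasDerivAt xc (φ s) s) :
    x N = x₀ + 1 ∧ xc 1 = x₀ + 1 / 3 ∧ ‖x N - xc 1‖ = 2 / 3 := by
  have hN0 : (0 : ℝ) < N := by positivity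
  have hxN : x N = x₀ + 1 := by
    have hstep : ∀ n < N, x (n + 1) = x n + (N : ℝ)⁻¹ := fun n _ => by
      rw [hx n, pow_right_comm, neg_one_sq, one_pow, mul_one]
    rw [eq_add_nsmul_of_succ_eq_add hstep, hx0, nsmul_eq_mul, mul_inv_cancel₀ hN0.ne']
  have hxc1 : xc 1 = x₀ + 1 / 3 := by
    have hstep : ∀ n < N, xc ((n + 1 : ℕ) / N) = xc (n / N) + (3 * (N : ℝ))⁻¹ := by
      intro n hn
      have hsub : Icc ((n : ℝ) / N) ((n + 1) / N) ⊆ Icc 0 1 :=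
        Icc_subset_Icc (by positivity) ((div_le_one hN0).2 (by exact_mod_cast hn))
      push_cast
      exact eq_add_of_sub_eq' <| sub_eq_of_hasDerivAt_alternating_interpolation_sq hN0 n
        fun s hs => hφ n hn s hs ▸ hxc s (hsub hs)
    have h := eq_add_nsmul_of_succ_eq_add (x := fun n : ℕ => xc (n / N)) hstep
    simp only [Nat.cast_zero, zero_div, div_self hN0.ne', hxc0, nsmul_eq_mul] at h
    rw [h]
    field_simp
  refine ⟨hxN, hxc1, ?_⟩
  rw [hxN, hxc1, show x₀ + 1 - (x₀ + 1 / 3) = 2 / 3 by ring]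
  norm_num

/-- ResNet with `f(x, θ) = θ²` and alternating weights `θ_n = (-1)^n` versus the
weight-interpolation ODE: `x_N = x₀ + 1` while `x(1) = x₀ + 1/3`, so the gap is `2/3`. -/
theorem resnet_weight_interpolation_gap
    (N : ℕ) (hN : 2 ≤ N) (hNeven : Even N)
    (x : ℕ → ℝ) (x₀ : ℝ) (hx0 : x 0 = x₀)
    (hx : ∀ n : ℕ, x (n + 1) = x n + (N : ℝ)⁻¹ * ((-1 : ℝ) ^ n) ^ 2)
    (φ : ℝ → ℝ)
    (hφ : ∀ n : ℕ, n < N → ∀ s ∈ Icc ((n : ℝ) / N) (((n : ℝ) + 1) / N),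
      φ s = (((n : ℝ) + 1 - N * s) * (-1 : ℝ) ^ n + ((N : ℝ) * s - n) * (-1 : ℝ) ^ (n + 1)) ^ 2)
    (xc : ℝ → ℝ) (hxc0 : xc 0 = x₀)
    (hxc : ∀ s ∈ Icc (0:ℝ) 1, HasDerivAt xc (φ s) s) :
    x N = x₀ + 1 ∧ xc 1 = x₀ + 1 / 3 ∧ ‖x N - xc 1‖ = 2 / 3 :=
  resnet_weight_interpolation_gap_general N hN x x₀ hx0 hx φ hφ xc hxc0 hxc
end

section
/- (Reconstruction error of reverse-time Euler.) Let f_n : ℝ^d → ℝ^d for n = 0,…,N−1 be C² with ‖f_n‖_∞ ≤ C_f and ‖∂_x f_n‖_∞ ≤ L_f (constants independent of n, N), with uniformly bounded second derivatives. Define the forward iterates x_{n+1} = x_n + (1/N) f_n(x_n) and the backward iterates x̃_N = x_N, x̃_n = x̃_{n+1} − (1/N) f_n(x̃_{n+1}). Then for all 0 ≤ n ≤ N, ‖x_n − x̃_n‖ ≤ (e^{L_f} − 1) C_f / N + O(1/N²). -/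
open Real

/-!
The backward step evaluates `f_n` at `x̃_{n+1}` where inverting the forward step would need
`x_n`; since `x_n = x_{n+1} - (1/N) f_n(x_n)`, these points are at most `e_{n+1} + C_f / N` apart,
where `e_n = ‖x_n - x̃_n‖`. Lipschitz continuity of `f_n` then gives
`e_n ≤ (1 + L_f/N) e_{n+1} + L_f C_f / N²` with `e_N = 0`, and the discrete Grönwall inequality
yields `e_n ≤ (C_f/N) ((1 + L_f/N)^{N-n} - 1) ≤ (e^{L_f} - 1) C_f / N`, so the `O(1/N²)` term
can be taken to be zero.
-/

theorem norm_sub_backward_euler_step_le {E : Type*} [NormedAddCommGroup E] [NormedSpace ℝ E]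
    {F : E → E} {h L C : ℝ} (hh : 0 ≤ h) (hL : 0 ≤ L) {x y : E}
    (hFx : ‖F x‖ ≤ C) (hF : ‖F x - F y‖ ≤ L * ‖x - y‖) :
    ‖x - (y - h • F y)‖ ≤ (1 + h * L) * ‖x + h • F x - y‖ + h * L * (h * C) := by
  have hxy : ‖x - y‖ ≤ ‖x + h • F x - y‖ + h * C :=
    calc ‖x - y‖ = ‖(x + h • F x - y) - h • F x‖ := by congr 1; abel
      _ ≤ ‖x + h • F x - y‖ + h * ‖F x‖ :=
        (norm_sub_le _ _).trans_eq (by rw [norm_smul, Real.norm_of_nonneg hh])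
      _ ≤ ‖x + h • F x - y‖ + h * C := by gcongr
  calc ‖x - (y - h • F y)‖ = ‖(x + h • F x - y) - h • (F x - F y)‖ := by
        congr 1; rw [smul_sub]; abel
    _ ≤ ‖x + h • F x - y‖ + h * ‖F x - F y‖ :=
        (norm_sub_le _ _).trans_eq (by rw [norm_smul, Real.norm_of_nonneg hh])
    _ ≤ ‖x + h • F x - y‖ + h * (L * (‖x + h • F x - y‖ + h * C)) := by
        gcongr; exact hF.trans (by gcongr)
    _ = (1 + h * L) * ‖x + h • F x - y‖ + h * L * (h * C) := by ring

theorem discrete_gronwall_reverse {u : ℕ → ℝ} {N : ℕ} {q c : ℝ} (hq : 0 ≤ q) (huN : u N ≤ 0)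
    (hu : ∀ n < N, u n ≤ (1 + q) * u (n + 1) + q * c) {n : ℕ} (hn : n ≤ N) :
    u n ≤ c * ((1 + q) ^ (N - n) - 1) := by
  induction hn using Nat.decreasingInduction with
  | self => simpa using huN
  | of_succ k hk ih =>
    calc u k ≤ (1 + q) * u (k + 1) + q * c := hu k hk
      _ ≤ (1 + q) * (c * ((1 + q) ^ (N - (k + 1)) - 1)) + q * c := by gcongr
      _ = c * ((1 + q) ^ (N - k) - 1) := by
        rw [show N - k = N - (k + 1) + 1 by omega, pow_succ]; ring

theorem one_add_div_pow_le_exp {L : ℝ} {k N : ℕ} (hL : 0 ≤ L) (hk : k ≤ N) :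
    (1 + L / N) ^ k ≤ exp L :=
  calc (1 + L / N) ^ k ≤ (1 + L / N) ^ N :=
        pow_le_pow_right₀ (le_add_of_nonneg_right (by positivity)) hk
    _ = (1 - -L / N) ^ N := by ring
    _ ≤ exp (- -L) := one_sub_div_pow_le_exp_neg (by linarith [N.cast_nonneg (α := ℝ)])
    _ = exp L := by rw [neg_neg]

theorem reverse_euler_reconstruction_error_general
    {d : ℕ} (f : ℕ → ℕ → EuclideanSpace ℝ (Fin d) → EuclideanSpace ℝ (Fin d))
    (Cf Lf : ℝ)
    (hsmooth : ∀ N n, n < N → ContDiff ℝ 2 (f N n))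
    (hCf : ∀ N n, n < N → ∀ x, ‖f N n x‖ ≤ Cf)
    (hLf' : ∀ N n, n < N → ∀ x, ‖fderiv ℝ (f N n) x‖ ≤ Lf)
    (x xt : ℕ → ℕ → EuclideanSpace ℝ (Fin d))
    (hfwd : ∀ N n, n < N → x N (n + 1) = x N n + (N : ℝ)⁻¹ • f N n (x N n))
    (hbwd0 : ∀ N, xt N N = x N N)
    (hbwd : ∀ N n, n < N → xt N n = xt N (n + 1) - (N : ℝ)⁻¹ • f N n (xt N (n + 1))) :
    ∃ K : ℝ, ∀ N, 1 ≤ N → ∀ n ≤ N,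
      ‖x N n - xt N n‖ ≤ (Real.exp Lf - 1) * Cf / N + K / (N : ℝ) ^ 2 := by
  refine ⟨0, fun N _ n hn => ?_⟩
  have hCf0 : 0 ≤ Cf := (norm_nonneg _).trans (hCf 1 0 one_pos 0)
  have hLf0 : 0 ≤ Lf := (norm_nonneg _).trans (hLf' 1 0 one_pos 0)
  have hlip : ∀ m < N, ∀ a b, ‖f N m a - f N m b‖ ≤ Lf * ‖a - b‖ := fun m hm a b =>
    convex_univ.norm_image_sub_le_of_norm_fderiv_le
      (fun y _ => ((hsmooth N m hm).differentiable (by norm_num)).differentiableAt)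
      (fun y _ => hLf' N m hm y) trivial trivial
  have hstep : ∀ m < N, ‖x N m - xt N m‖ ≤ (1 + (N : ℝ)⁻¹ * Lf) * ‖x N (m + 1) - xt N (m + 1)‖
      + (N : ℝ)⁻¹ * Lf * ((N : ℝ)⁻¹ * Cf) := fun m hm => by
    rw [hbwd N m hm, hfwd N m hm]
    exact norm_sub_backward_euler_step_le (by positivity) hLf0 (hCf N m hm _) (hlip m hm _ _)
  have hgronwall := discrete_gronwall_reverse (u := fun m => ‖x N m - xt N m‖)
    (by positivity) (by simp [hbwd0]) hstep hn
  have hexp := one_add_div_pow_le_exp (k := N - n) hLf0 (Nat.sub_le N n)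
  rw [div_eq_inv_mul] at hexp
  calc ‖x N n - xt N n‖ ≤ (N : ℝ)⁻¹ * Cf * ((1 + (N : ℝ)⁻¹ * Lf) ^ (N - n) - 1) := hgronwall
    _ ≤ (N : ℝ)⁻¹ * Cf * (exp Lf - 1) := by gcongr
    _ = (exp Lf - 1) * Cf / N + 0 / (N : ℝ) ^ 2 := by ring

/-- Reconstruction error of the reverse-time Euler scheme for a ResNet with bounded,
Lipschitz residual functions: `‖x_n - x̃_n‖ ≤ (e^{L_f} - 1) C_f / N + O(1/N²)`. -/
theorem reverse_euler_reconstruction_error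
    {d : ℕ} (f : ℕ → ℕ → EuclideanSpace ℝ (Fin d) → EuclideanSpace ℝ (Fin d))
    (Cf Lf C₂ : ℝ) (hLf : 0 < Lf)
    (hsmooth : ∀ N n, n < N → ContDiff ℝ 2 (f N n))
    (hCf : ∀ N n, n < N → ∀ x, ‖f N n x‖ ≤ Cf)
    (hLf' : ∀ N n, n < N → ∀ x, ‖fderiv ℝ (f N n) x‖ ≤ Lf)
    (hC₂ : ∀ N n, n < N → ∀ x, ‖iteratedFDeriv ℝ 2 (f N n) x‖ ≤ C₂)
    (x xt : ℕ → ℕ → EuclideanSpace ℝ (Fin d))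
    (hfwd : ∀ N n, n < N → x N (n + 1) = x N n + (N : ℝ)⁻¹ • f N n (x N n))
    (hbwd0 : ∀ N, xt N N = x N N)
    (hbwd : ∀ N n, n < N → xt N n = xt N (n + 1) - (N : ℝ)⁻¹ • f N n (xt N (n + 1))) :
    ∃ K : ℝ, ∀ N, 1 ≤ N → ∀ n ≤ N,
      ‖x N n - xt N n‖ ≤ (Real.exp Lf - 1) * Cf / N + K / (N : ℝ) ^ 2 :=
  reverse_euler_reconstruction_error_general f Cf Lf hsmooth hCf hLf' x xt hfwd hbwd0 hbwd
end

section
/- (Heun one-step reconstruction defect.) Let f_n, f_{n+1} : ℝ^d → ℝ^d be C² with bounded derivatives up to order 2, with Jacobians J_n = ∂_x f_n. Define φ_n(x) = (1/2)(f_n(x) + f_{n+1}(x + (1/N) f_n(x))) and ψ_n(x) = (1/2)(f_{n+1}(x) + f_n(x − (1/N) f_{n+1}(x))). Then for every x, ψ_n(x + (1/N)φ_n(x)) − φ_n(x) = (1/(4N))(J_{n+1}(x) − J_n(x))[f_{n+1}(x) − f_n(x)] + O(1/N²), where the O(1/N²) is uniform in x over any set on which f_n, f_{n+1} and their first two derivatives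 are uniformly bounded. -/
/-!
Write `a = f x`, `c = g x`, `b = g (x + ε a)`, `φ = (a + b)/2`, `y = x + ε φ` and let `A`, `G`
be the Jacobians of `f`, `g` at `x`. Expanding `g y`, `f (y - ε g y)` and `b` to first order
around `x`, the zeroth-order terms of the defect cancel and the first-order terms combine to
`(ε/4) (G - A)(c - a)` up to `(ε/4) G (b - c) + (ε/2) A ((b - c)/2 - (g y - c))`. Since `b - c`
and `g y - c` are `O(ε)` by the mean value inequality, this and the three Taylor remainders are
`O(ε²)`, with constant `4 C³` when `C` bounds `f`, `g` and their first two derivatives.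
-/

section Calculus

variable {E F : Type*} [NormedAddCommGroup E] [NormedSpace ℝ E]
  [NormedAddCommGroup F] [NormedSpace ℝ F]

theorem norm_fderiv_sub_fderiv_le_of_norm_iteratedFDeriv_two_le {f : E → F}
    (hf : ContDiff ℝ 2 f) {C : ℝ} (h2 : ∀ z, ‖iteratedFDeriv ℝ 2 f z‖ ≤ C) (u v : E) :
    ‖fderiv ℝ f u - fderiv ℝ f v‖ ≤ C * ‖u - v‖ := by
  have hd : Differentiable ℝ (fderiv ℝ f) :=
    (hf.fderiv_right (m := 1) le_rfl).differentiable one_ne_zero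
  refine Convex.norm_image_sub_le_of_norm_fderiv_le (fun z _ => hd z) (fun z _ => ?_)
    convex_univ (Set.mem_univ v) (Set.mem_univ u)
  rw [← norm_iteratedFDeriv_one, norm_iteratedFDeriv_fderiv]
  exact h2 z

theorem norm_image_add_sub_sub_fderiv_le {f : E → F} (hf : Differentiable ℝ f) {C : ℝ}
    (hC : 0 ≤ C) (hlip : ∀ u v, ‖fderiv ℝ f u - fderiv ℝ f v‖ ≤ C * ‖u - v‖) (x h : E) :
    ‖f (x + h) - f x - fderiv ℝ f x h‖ ≤ C * ‖h‖ ^ 2 := by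
  have hbound : ∀ z ∈ Metric.closedBall x ‖h‖, ‖fderiv ℝ f z - fderiv ℝ f x‖ ≤ C * ‖h‖ :=
    fun z hz => (hlip z x).trans (mul_le_mul_of_nonneg_left (mem_closedBall_iff_norm.1 hz) hC)
  have := (convex_closedBall x ‖h‖).norm_image_sub_le_of_norm_fderiv_le' (y := x + h)
    (fun z _ => hf z) hbound (Metric.mem_closedBall_self (norm_nonneg h)) (by simp)
  rw [add_sub_cancel_left] at this
  linarith [sq ‖h‖]

end Calculus

section Heun

variable {E : Type*} [NormedAddCommGroup E] [NormedSpace ℝ E]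

noncomputable def heunForward (f g : E → E) (ε : ℝ) (x : E) : E :=
  (1 / 2 : ℝ) • (f x + g (x + ε • f x))

noncomputable def heunBackward (f g : E → E) (ε : ℝ) (x : E) : E :=
  (1 / 2 : ℝ) • (g x + f (x - ε • g x))

/-- `u`, `v` stand for `g y`, `f (y - ε g y)`; the last summand collects the three
first-order Taylor remainders. -/
theorem heun_defect_decomposition (A G : E →L[ℝ] E) (ε : ℝ) {a b φ : E}
    (hφ : φ = (1 / 2 : ℝ) • (a + b)) (c u v : E) :
    (1 / 2 : ℝ) • (u + v) - φ - (ε / 4) • ((G - A) (c - a))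
      = (ε / 4) • G (b - c) + (ε / 2) • A ((1 / 2 : ℝ) • (b - c) - (u - c))
        + (1 / 2 : ℝ) • ((u - c - G (ε • φ)) + (v - a - A (ε • (φ - u)))
          - (b - c - G (ε • a))) := by
  subst hφ
  simp only [map_sub, map_add, map_smul, sub_apply, smul_add, smul_sub, smul_smul]
  module

theorem norm_heun_defect_le {f g : E → E} {C : ℝ} (hf : Differentiable ℝ f)
    (hg : Differentiable ℝ g) (hf0 : ∀ x, ‖f x‖ ≤ C) (hg0 : ∀ x, ‖g x‖ ≤ C)
    (hf1 : ∀ x, ‖fderiv ℝ f x‖ ≤ C) (hg1 : ∀ x, ‖fderiv ℝ g x‖ ≤ C)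
    (hf2 : ∀ u v, ‖fderiv ℝ f u - fderiv ℝ f v‖ ≤ C * ‖u - v‖)
    (hg2 : ∀ u v, ‖fderiv ℝ g u - fderiv ℝ g v‖ ≤ C * ‖u - v‖) (ε : ℝ) (x : E) :
    ‖heunBackward f g ε (x + ε • heunForward f g ε x) - heunForward f g ε x
        - (ε / 4) • ((fderiv ℝ g x - fderiv ℝ f x) (g x - f x))‖ ≤ 4 * C ^ 3 * ε ^ 2 := by
  have hC : 0 ≤ C := (norm_nonneg _).trans (hf0 x)
  set A := fderiv ℝ f x
  set G := fderiv ℝ g x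
  set a := f x
  set b := g (x + ε • a)
  set φ := heunForward f g ε x
  set y := x + ε • φ
  have hφ : ‖φ‖ ≤ C := by
    calc ‖φ‖ ≤ ‖(1 / 2 : ℝ)‖ * (‖a‖ + ‖b‖) :=
          (norm_smul_le _ _).trans (by gcongr; exact norm_add_le _ _)
      _ ≤ ‖(1 / 2 : ℝ)‖ * (C + C) := by gcongr <;> [exact hf0 x; exact hg0 _]
      _ = C := by norm_num; ring
  have hsmul : ∀ {v : E} {r : ℝ}, ‖v‖ ≤ r → ‖ε • v‖ ≤ |ε| * r := fun hv => by
    rw [norm_smul, Real.norm_eq_abs]; gcongr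
  have hg_lip : ∀ u v, ‖g u - g v‖ ≤ C * ‖u - v‖ := fun u v =>
    convex_univ.norm_image_sub_le_of_norm_fderiv_le (fun z _ => hg z) (fun z _ => hg1 z)
      (Set.mem_univ v) (Set.mem_univ u)
  have hb : ‖b - g x‖ ≤ C * (|ε| * C) :=
    (hg_lip _ _).trans (by rw [add_sub_cancel_left]; gcongr; exact hsmul (hf0 x))
  have hgy : ‖g y - g x‖ ≤ C * (|ε| * C) :=
    (hg_lip _ _).trans (by rw [add_sub_cancel_left]; gcongr; exact hsmul hφ)
  have hR3 : ‖b - g x - G (ε • a)‖ ≤ C * (|ε| * C) ^ 2 :=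
    (norm_image_add_sub_sub_fderiv_le hg hC hg2 x _).trans (by gcongr; exact hsmul (hf0 x))
  have hR1 : ‖g y - g x - G (ε • φ)‖ ≤ C * (|ε| * C) ^ 2 :=
    (norm_image_add_sub_sub_fderiv_le hg hC hg2 x _).trans (by gcongr; exact hsmul hφ)
  have hR2 : ‖f (x + ε • (φ - g y)) - a - A (ε • (φ - g y))‖ ≤ C * (|ε| * (2 * C)) ^ 2 :=
    (norm_image_add_sub_sub_fderiv_le hf hC hf2 x _).trans (by
      gcongr; exact hsmul ((norm_sub_le _ _).trans (by linarith [hg0 y])))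
  have hz : y - ε • g y = x + ε • (φ - g y) := by simp only [y, smul_sub]; abel
  rw [heunBackward, hz, heun_defect_decomposition A G ε (φ := φ) (b := b) rfl]
  have hT1 : ‖(ε / 4) • G (b - g x)‖ ≤ |ε| / 4 * (C * (C * (|ε| * C))) := by
    rw [norm_smul, norm_div, Real.norm_eq_abs, RCLike.norm_ofNat]
    gcongr
    exact G.le_of_opNorm_le_of_le (hg1 x) hb
  have hT2 : ‖(ε / 2) • A ((1 / 2 : ℝ) • (b - g x) - (g y - g x))‖
      ≤ |ε| / 2 * (C * (1 / 2 * (C * (|ε| * C)) + C * (|ε| * C))) := by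
    rw [norm_smul, norm_div, Real.norm_eq_abs, RCLike.norm_ofNat]
    gcongr
    refine A.le_of_opNorm_le_of_le (hf1 x) ((norm_sub_le _ _).trans ?_)
    rw [norm_smul, Real.norm_of_nonneg (by norm_num)]
    gcongr
  have hT3 : ‖(1 / 2 : ℝ) • ((g y - g x - G (ε • φ))
        + (f (x + ε • (φ - g y)) - a - A (ε • (φ - g y))) - (b - g x - G (ε • a)))‖
      ≤ 1 / 2 * (C * (|ε| * C) ^ 2 + C * (|ε| * (2 * C)) ^ 2 + C * (|ε| * C) ^ 2) := by
    rw [norm_smul, Real.norm_of_nonneg (by norm_num)]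
    gcongr
    exact (norm_sub_le _ _).trans (add_le_add ((norm_add_le _ _).trans (add_le_add hR1 hR2)) hR3)
  calc _ ≤ _ := norm_add₃_le.trans (add_le_add (add_le_add hT1 hT2) hT3)
    _ = 4 * C ^ 3 * ε ^ 2 := by rw [← sq_abs ε]; ring

end Heun

/-- Heun one-step reconstruction defect: with `φ_N` the Heun forward increment and
`ψ_N` the Heun backward increment, `ψ_N(x + φ_N(x)/N) - φ_N(x)` equals
`(1/(4N))(J_{n+1}(x) - J_n(x))[f_{n+1}(x) - f_n(x)]` up to `O(1/N²)`, uniformly in `x`. -/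
theorem heun_one_step_defect
    {d : ℕ} (f g : EuclideanSpace ℝ (Fin d) → EuclideanSpace ℝ (Fin d))
    (hf : ContDiff ℝ 2 f) (hg : ContDiff ℝ 2 g)
    (C : ℝ)
    (hf0 : ∀ x, ‖f x‖ ≤ C) (hg0 : ∀ x, ‖g x‖ ≤ C)
    (hf1 : ∀ x, ‖fderiv ℝ f x‖ ≤ C) (hg1 : ∀ x, ‖fderiv ℝ g x‖ ≤ C)
    (hf2 : ∀ x, ‖iteratedFDeriv ℝ 2 f x‖ ≤ C) (hg2 : ∀ x, ‖iteratedFDeriv ℝ 2 g x‖ ≤ C) :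
    ∃ K : ℝ, ∀ N : ℕ, 1 ≤ N → ∀ x : EuclideanSpace ℝ (Fin d),
      ‖(1 / 2 : ℝ) • (g (x + (N : ℝ)⁻¹ • ((1 / 2 : ℝ) • (f x + g (x + (N : ℝ)⁻¹ • f x))))
            + f ((x + (N : ℝ)⁻¹ • ((1 / 2 : ℝ) • (f x + g (x + (N : ℝ)⁻¹ • f x))))
                - (N : ℝ)⁻¹ • g (x + (N : ℝ)⁻¹ • ((1 / 2 : ℝ) • (f x + g (x + (N : ℝ)⁻¹ • f x))))))
          - (1 / 2 : ℝ) • (f x + g (x + (N : ℝ)⁻¹ • f x))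
          - (1 / (4 * (N : ℝ))) • ((fderiv ℝ g x - fderiv ℝ f x) (g x - f x))‖
        ≤ K / (N : ℝ) ^ 2 := by
  refine ⟨4 * C ^ 3, fun N _ x => ?_⟩
  have hdefect := norm_heun_defect_le (hf.differentiable two_ne_zero)
    (hg.differentiable two_ne_zero) hf0 hg0 hf1 hg1
    (norm_fderiv_sub_fderiv_le_of_norm_iteratedFDeriv_two_le hf hf2)
    (norm_fderiv_sub_fderiv_le_of_norm_iteratedFDeriv_two_le hg hg2) (N : ℝ)⁻¹ x
  rw [show 1 / (4 * (N : ℝ)) = (N : ℝ)⁻¹ / 4 by ring, div_eq_mul_inv _ ((N : ℝ) ^ 2), ← inv_pow]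
  exact hdefect
end
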